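/- If A is any subset of a fuzzy Riesz space X, then the disjoint complement A^d is a fuzzy band of X. -/

import Mathlib

/-- A fuzzy Riesz space structure on a real vector space `X`:
a fuzzy order `μ : X × X → [0,1]` compatible with the vector structure,
together with binary suprema and infima with respect to the fuzzy order. -/
structure FuzzyRiesz (X : Type*) [AddCommGroup X] [Module ℝ X] where
  μ : X → X → ℝ
  nonneg : ∀ x y : X, 0 ≤ μ x y
  le_one : ∀ x y : X, μ x y ≤ 1
  refl : ∀ x : X, μ x x = 1
  antisymm : ∀ x y : X, 1 < μ x y + μ y x → x = y
  trans : ∀ x y z : X, min (μ x y) (μ y z) ≤ μ x z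
  add_compat : ∀ x y z : X, 1/2 < μ x y → μ x y ≤ μ (x + z) (y + z)
  smul_compat : ∀ (x y : X) (c : ℝ), 0 ≤ c → 1/2 < μ x y → μ x y ≤ μ (c • x) (c • y)
  sup : X → X → X
  inf : X → X → X
  le_sup_left : ∀ x y : X, 1/2 < μ x (sup x y)
  le_sup_right : ∀ x y : X, 1/2 < μ y (sup x y)
  sup_le : ∀ x y z : X, 1/2 < μ x z → 1/2 < μ y z → 1/2 < μ (sup x y) z
  inf_le_left : ∀ x y : X, 1/2 < μ (inf x y) x
  inf_le_right : ∀ x y : X, 1/2 < μ (inf x y) y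
  le_inf : ∀ x y z : X, 1/2 < μ z x → 1/2 < μ z y → 1/2 < μ z (inf x y)

namespace FuzzyRiesz

universe v

variable {X : Type*} [AddCommGroup X] [Module ℝ X]

/-- The absolute value `|x| = x ∨ (−x)`. -/
def fabs (F : FuzzyRiesz X) (x : X) : X := F.sup x (-x)

/-- `x` is positive: `μ(0,x) > 1/2`. -/
def Pos (F : FuzzyRiesz X) (x : X) : Prop := 1/2 < F.μ 0 x

/-- `S⁺`, the set of positive elements of `S`. -/
def posPart (F : FuzzyRiesz X) (S : Set X) : Set X := {x ∈ S | F.Pos x}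

/-- `y` is an upper bound of `A`. -/
def UpperBound (F : FuzzyRiesz X) (A : Set X) (y : X) : Prop := ∀ x ∈ A, 1/2 < F.μ x y

/-- `y` is a lower bound of `A`. -/
def LowerBound (F : FuzzyRiesz X) (A : Set X) (y : X) : Prop := ∀ x ∈ A, 1/2 < F.μ y x

/-- `z = sup A` in the fuzzy order. -/
def IsSup (F : FuzzyRiesz X) (A : Set X) (z : X) : Prop :=
  F.UpperBound A z ∧ ∀ y : X, F.UpperBound A y → 1/2 < F.μ z y

/-- `z = inf A` in the fuzzy order. -/
def IsInf (F : FuzzyRiesz X) (A : Set X) (z : X) : Prop :=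
  F.LowerBound A z ∧ ∀ y : X, F.LowerBound A y → 1/2 < F.μ y z

/-- `z = inf A`, computed relative to the subset `Y` (lower bounds taken in `Y`). -/
def IsInfIn (F : FuzzyRiesz X) (Y A : Set X) (z : X) : Prop :=
  F.LowerBound A z ∧ ∀ y ∈ Y, F.LowerBound A y → 1/2 < F.μ y z

/-- A set is fuzzy solid if `μ(|x|,|y|) > 1/2` and `y ∈ A` imply `x ∈ A`. -/
def Solid (F : FuzzyRiesz X) (A : Set X) : Prop :=
  ∀ x y : X, 1/2 < F.μ (F.fabs x) (F.fabs y) → y ∈ A → x ∈ A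

/-- A fuzzy ideal: a fuzzy solid vector subspace. -/
structure IsIdeal (F : FuzzyRiesz X) (I : Set X) : Prop where
  zero_mem : (0 : X) ∈ I
  add_mem : ∀ {x y : X}, x ∈ I → y ∈ I → x + y ∈ I
  smul_mem : ∀ (c : ℝ) {x : X}, x ∈ I → c • x ∈ I
  solid : ∀ x y : X, 1/2 < F.μ (F.fabs x) (F.fabs y) → y ∈ I → x ∈ I

/-- A fuzzy ideal of the subspace `Y` (with the restricted fuzzy order and
vector structure): a vector subspace of `Y` that is solid relative to `Y`. -/
structure IsIdealIn (F : FuzzyRiesz X) (Y I : Set X) : Prop where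
  subset : I ⊆ Y
  zero_mem : (0 : X) ∈ I
  add_mem : ∀ {x y : X}, x ∈ I → y ∈ I → x + y ∈ I
  smul_mem : ∀ (c : ℝ) {x : X}, x ∈ I → c • x ∈ I
  solid : ∀ x ∈ Y, ∀ y ∈ I, 1/2 < F.μ (F.fabs x) (F.fabs y) → x ∈ I

/-- A decreasing net. -/
def Decreasing (F : FuzzyRiesz X) {ι : Type v} [Preorder ι] (y : ι → X) : Prop :=
  ∀ a b : ι, a ≤ b → 1/2 < F.μ (y b) (y a)

/-- An increasing net. -/
def Increasing (F : FuzzyRiesz X) {ι : Type v} [Preorder ι] (x : ι → X) : Prop :=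
  ∀ a b : ι, a ≤ b → 1/2 < F.μ (x a) (x b)

/-- The net `x` converges in fuzzy order to `l`: there is a net `y` over the same
index set with `μ(|x_α − l|, y_α) > 1/2` for all `α` and `y_α ↓ 0`. -/
def FuzzyOrderConv (F : FuzzyRiesz X) {ι : Type v} [Preorder ι] (x : ι → X) (l : X) : Prop :=
  ∃ y : ι → X, (∀ a, 1/2 < F.μ (F.fabs (x a - l)) (y a)) ∧ F.Decreasing y ∧
    F.IsInf (Set.range y) 0

/-- Fuzzy order convergence relative to the subset `Y` (the dominating net lies in `Y`
and its infimum is computed in `Y`). -/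
def FuzzyOrderConvIn (F : FuzzyRiesz X) (Y : Set X) {ι : Type v} [Preorder ι]
    (x : ι → X) (l : X) : Prop :=
  ∃ y : ι → X, (∀ a, y a ∈ Y) ∧ (∀ a, 1/2 < F.μ (F.fabs (x a - l)) (y a)) ∧ F.Decreasing y ∧
    F.IsInfIn Y (Set.range y) 0

/-- `S` is fuzzy σ-order closed: closed under fuzzy order limits of sequences in `S`. -/
def SigmaOrderClosed (F : FuzzyRiesz X) (S : Set X) : Prop :=
  ∀ (x : ℕ → X) (l : X), (∀ n, x n ∈ S) → F.FuzzyOrderConv x l → l ∈ S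

/-- `S` is fuzzy order closed: closed under fuzzy order limits of nets in `S`. -/
def OrderClosed (F : FuzzyRiesz X) (S : Set X) : Prop :=
  ∀ (ι : Type v) [Preorder ι] [Nonempty ι] [IsDirected ι (· ≤ ·)],
    ∀ (x : ι → X) (l : X), (∀ a, x a ∈ S) → F.FuzzyOrderConv x l → l ∈ S

/-- `S` is fuzzy order closed in the subspace `Y`. -/
def OrderClosedIn (F : FuzzyRiesz X) (Y S : Set X) : Prop :=
  ∀ (ι : Type v) [Preorder ι] [Nonempty ι] [IsDirected ι (· ≤ ·)],
    ∀ (x : ι → X) (l : X), (∀ a, x a ∈ S) → l ∈ Y → F.FuzzyOrderConvIn Y x l → l ∈ S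

/-- A fuzzy band: a fuzzy order closed fuzzy ideal. -/
def IsBand (F : FuzzyRiesz X) (B : Set X) : Prop := F.IsIdeal B ∧ OrderClosed.{v} F B

/-- A fuzzy band of the subspace `Y`. -/
def IsBandIn (F : FuzzyRiesz X) (Y B : Set X) : Prop := F.IsIdealIn Y B ∧ OrderClosedIn.{v} F Y B

/-- The disjoint complement `A^d = {x : |x| ∧ |y| = 0 for all y ∈ A}`. -/
def dcomp (F : FuzzyRiesz X) (A : Set X) : Set X :=
  {x : X | ∀ y ∈ A, F.inf (F.fabs x) (F.fabs y) = 0}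

/-- The algebraic sum of two subsets. -/
def sumSet (A B : Set X) : Set X := {z : X | ∃ a ∈ A, ∃ b ∈ B, z = a + b}

/-- `S` is fuzzy order dense in `X`. -/
def OrderDense (F : FuzzyRiesz X) (S : Set X) : Prop :=
  ∀ x : X, x ≠ 0 → F.Pos x → ∃ y ∈ S, y ≠ 0 ∧ 1/2 < F.μ y x

/-- `S` is fuzzy order dense in the subspace `Y`. -/
def OrderDenseIn (F : FuzzyRiesz X) (Y S : Set X) : Prop :=
  ∀ x ∈ Y, x ≠ 0 → F.Pos x → ∃ y ∈ S, y ≠ 0 ∧ 1/2 < F.μ y x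

/-- `x` is nonnegative: it is not the case that `μ(x,0) > 1/2`. -/
def Nonneg (F : FuzzyRiesz X) (x : X) : Prop := ¬ (1/2 < F.μ x 0)

/-- `X` is fuzzy Archimedean: for every nonzero nonnegative `x`, the set
`{λ • x : λ > 0}` has no upper bound. -/
def FuzzyArchimedean (F : FuzzyRiesz X) : Prop :=
  ∀ x : X, x ≠ 0 → F.Nonneg x →
    ¬ ∃ y : X, F.UpperBound {z : X | ∃ c : ℝ, 0 < c ∧ z = c • x} y

/-- `X` is fuzzy Dedekind complete. -/
def DedekindComplete (F : FuzzyRiesz X) : Prop :=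
  ∀ A : Set X, A.Nonempty → (∃ y, F.UpperBound A y) → ∃ z, F.IsSup A z

/-- `X` is fuzzy Dedekind σ-complete. -/
def DedekindSigmaComplete (F : FuzzyRiesz X) : Prop :=
  ∀ A : Set X, A.Nonempty → A.Countable →
    ((∃ y, F.UpperBound A y) → ∃ z, F.IsSup A z) ∧
    ((∃ y, F.LowerBound A y) → ∃ z, F.IsInf A z)

/-- `D` is directed to the right. -/
def DirectedRight (F : FuzzyRiesz X) (D : Set X) : Prop :=
  ∀ E : Set X, E ⊆ D → E.Finite → ∃ d ∈ D, ∀ e ∈ E, 1/2 < F.μ e d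

/-- `B` is a fuzzy projection band: a fuzzy band such that every `x ∈ X` decomposes
uniquely as `x = x₁ + x₂` with `x₁ ∈ B`, `x₂ ∈ B^d`. -/
def IsProjBand (F : FuzzyRiesz X) (B : Set X) : Prop :=
  IsBand.{v} F B ∧ ∀ x : X, ∃! p : X × X, p.1 ∈ B ∧ p.2 ∈ F.dcomp B ∧ x = p.1 + p.2

/-- There is an increasing net of elements of `S`, over some nonempty directed
preordered index set, whose supremum is `l`. -/
def IncNetSup (F : FuzzyRiesz X) (S : Set X) (l : X) : Prop :=
  ∃ (ι : Type v) (r : ι → ι → Prop), Nonempty ι ∧ (∀ a, r a a) ∧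
    (∀ a b c, r a b → r b c → r a c) ∧ (∀ a b, ∃ c, r a c ∧ r b c) ∧
    ∃ net : ι → X, (∀ a, net a ∈ S) ∧ (∀ a b, r a b → 1/2 < F.μ (net a) (net b)) ∧
      F.IsSup (Set.range net) l

end FuzzyRiesz

/-!
The crisp relation `x ≤ y :↔ 1/2 < μ x y` makes `X` a vector lattice in the classical sense, with
lattice operations `F.sup`, `F.inf` and absolute value `F.fabs`, and the fuzzy notions of bound,
infimum, ideal and order convergence are the classical ones for this order. So the theorem is the
classical fact that disjoint complements in a vector lattice are bands. The key inequality is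
`(b + c) ⊓ d ≤ c` whenever `b ⊓ d = 0` and `0 ≤ c`: it gives closure under addition, hence under
scalar multiples `|c • x| ≤ n • |x|`, and closure under order limits via `|l| ≤ |xᵢ| + |xᵢ - l|`.
-/

namespace LatticeOrderedAddCommGroup

lemma inf_eq_zero_of_le {E : Type*} [Lattice E] [Zero E] {a b d : E} (ha : 0 ≤ a) (hd : 0 ≤ d)
    (hab : a ≤ b) (hbd : b ⊓ d = 0) : a ⊓ d = 0 :=
  le_antisymm ((inf_le_inf_right d hab).trans hbd.le) (le_inf ha hd)

section

variable {E : Type*} [Lattice E] [AddCommGroup E] [IsOrderedAddMonoid E]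

def disjointComplement (A : Set E) : Set E := {x | ∀ y ∈ A, |x| ⊓ |y| = 0}

variable {A : Set E}

lemma add_inf_le_of_inf_eq_zero {b c d : E} (hbd : b ⊓ d = 0) (hc : 0 ≤ c) :
    (b + c) ⊓ d ≤ c := by
  have h : (b + c) ⊓ d - c ≤ b ⊓ d :=
    le_inf (sub_le_iff_le_add.2 inf_le_left) ((sub_le_self _ hc).trans inf_le_right)
  simpa [hbd] using h

lemma add_inf_eq_zero {b c d : E} (hb : 0 ≤ b) (hc : 0 ≤ c) (hd : 0 ≤ d) (hbd : b ⊓ d = 0)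
    (hcd : c ⊓ d = 0) : (b + c) ⊓ d = 0 :=
  le_antisymm ((le_inf (add_inf_le_of_inf_eq_zero hbd hc) inf_le_right).trans hcd.le)
    (le_inf (add_nonneg hb hc) hd)

lemma nsmul_inf_eq_zero {b d : E} (hb : 0 ≤ b) (hd : 0 ≤ d) (hbd : b ⊓ d = 0) (n : ℕ) :
    (n • b) ⊓ d = 0 := by
  induction n with
  | zero => simpa using hd
  | succ n ih => rw [succ_nsmul]; exact add_inf_eq_zero (nsmul_nonneg hb n) hb hd ih hbd

lemma zero_mem_disjointComplement : (0 : E) ∈ disjointComplement A := fun _ _ ↦ by simp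

lemma isSolid_disjointComplement : IsSolid (disjointComplement A) := fun _ hx _ hyx z hz ↦
  inf_eq_zero_of_le (abs_nonneg _) (abs_nonneg z) hyx (hx z hz)

lemma add_mem_disjointComplement {x y : E} (hx : x ∈ disjointComplement A)
    (hy : y ∈ disjointComplement A) : x + y ∈ disjointComplement A := fun z hz ↦
  inf_eq_zero_of_le (abs_nonneg _) (abs_nonneg z) (abs_add_le x y)
    (add_inf_eq_zero (abs_nonneg x) (abs_nonneg y) (abs_nonneg z) (hx z hz) (hy z hz))

lemma mem_disjointComplement_of_abs_sub_le {ι : Type*} {x w : ι → E} {l : E}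
    (hx : ∀ i, x i ∈ disjointComplement A) (hw : ∀ i, |x i - l| ≤ w i)
    (hinf : IsGLB (Set.range w) 0) : l ∈ disjointComplement A := by
  intro y hy
  have hbound : |l| ⊓ |y| ∈ lowerBounds (Set.range w) := by
    rintro _ ⟨i, rfl⟩
    have hl : |l| ≤ |x i| + |x i - l| := by
      simpa [abs_sub_comm l] using abs_add_le (x i) (l - x i)
    calc |l| ⊓ |y| ≤ (|x i| + |x i - l|) ⊓ |y| := inf_le_inf_right _ hl
      _ ≤ |x i - l| := add_inf_le_of_inf_eq_zero (hx i y hy) (abs_nonneg _)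
      _ ≤ w i := hw i
  exact le_antisymm (hinf.2 hbound) (le_inf (abs_nonneg l) (abs_nonneg y))

end

lemma abs_smul_le {R E : Type*} [Ring R] [LinearOrder R] [IsOrderedRing R] [Lattice E]
    [AddCommGroup E] [Module R E] [PosSMulMono R E] (c : R) (x : E) : |c • x| ≤ |c| • |x| := by
  rcases le_total 0 c with hc | hc
  · rw [abs_of_nonneg hc, abs_le', ← smul_neg]
    exact ⟨smul_le_smul_of_nonneg_left (le_abs_self x) hc,
      smul_le_smul_of_nonneg_left (neg_le_abs x) hc⟩
  · rw [abs_of_nonpos hc, abs_le', ← neg_smul, ← neg_smul_neg]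
    exact ⟨smul_le_smul_of_nonneg_left (neg_le_abs x) (neg_nonneg.2 hc),
      smul_le_smul_of_nonneg_left (le_abs_self x) (neg_nonneg.2 hc)⟩

lemma smul_mem_disjointComplement {R E : Type*} [Ring R] [LinearOrder R] [IsOrderedRing R]
    [Archimedean R] [Lattice E] [AddCommGroup E] [IsOrderedAddMonoid E] [Module R E]
    [PosSMulMono R E] {A : Set E} (c : R) {x : E} (hx : x ∈ disjointComplement A) :
    c • x ∈ disjointComplement A := by
  obtain ⟨n, hn⟩ := exists_nat_ge |c|
  have hle : |c • x| ≤ n • |x| := by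
    rw [← Nat.cast_smul_eq_nsmul R]
    exact (abs_smul_le c x).trans (smul_le_smul_of_nonneg_right hn (abs_nonneg x))
  exact fun y hy ↦ inf_eq_zero_of_le (abs_nonneg _) (abs_nonneg y) hle
    (nsmul_inf_eq_zero (abs_nonneg x) (abs_nonneg y) (hx y hy) n)

end LatticeOrderedAddCommGroup

namespace FuzzyRiesz

variable {X : Type*} [AddCommGroup X] [Module ℝ X]

/-- `X` ordered by the crisp part `x ≤ y :↔ 1/2 < μ x y` of the fuzzy order. -/
def Crisp (_F : FuzzyRiesz X) : Type _ := X

variable (F : FuzzyRiesz X)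

instance : AddCommGroup F.Crisp := inferInstanceAs (AddCommGroup X)

instance : Module ℝ F.Crisp := inferInstanceAs (Module ℝ X)

instance : Lattice F.Crisp where
  le x y := 1/2 < F.μ x y
  le_refl x := (show (1 : ℝ) / 2 < 1 by norm_num).trans_eq (F.refl x).symm
  le_trans x y z hxy hyz := (lt_min hxy hyz).trans_le (F.trans x y z)
  le_antisymm x y (hxy : 1/2 < F.μ x y) (hyx : 1/2 < F.μ y x) := F.antisymm x y (by linarith)
  sup := F.sup
  inf := F.inf
  le_sup_left := F.le_sup_left
  le_sup_right := F.le_sup_right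
  sup_le := F.sup_le
  inf_le_left := F.inf_le_left
  inf_le_right := F.inf_le_right
  le_inf x y z := F.le_inf y z x

instance : IsOrderedAddMonoid F.Crisp where
  add_le_add_left x y h z := h.trans_le (F.add_compat x y z h)

instance : PosSMulMono ℝ F.Crisp where
  smul_le_smul_of_nonneg_left c hc x y h := h.trans_le (F.smul_compat x y c hc h)

end FuzzyRiesz

open LatticeOrderedAddCommGroup

universe u

/-- the disjoint complement of any subset of a fuzzy Riesz space
is a fuzzy band. -/
theorem dcomp_isBand {X : Type*} [AddCommGroup X] [Module ℝ X]
    (F : FuzzyRiesz X) (A : Set X) :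
    FuzzyRiesz.IsBand.{u} F (F.dcomp A) := by
  change FuzzyRiesz.IsBand F (disjointComplement (E := F.Crisp) A)
  refine ⟨⟨zero_mem_disjointComplement (E := F.Crisp), add_mem_disjointComplement (E := F.Crisp),
    smul_mem_disjointComplement (E := F.Crisp),
    fun x y hxy hy ↦ isSolid_disjointComplement (E := F.Crisp) hy hxy⟩, ?_⟩
  rintro ι _ _ _ x l hx ⟨w, hw, -, hinf⟩
  exact mem_disjointComplement_of_abs_sub_le (E := F.Crisp) hx hw hinf
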